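/- Let W : ℝ^d → ℝ satisfy assumptions (A0)–(A2). Let (W_n)_{n≥1} be even functions in C¹(ℝ^d), each λ-convex with |∇W_n(x)| ≤ w_∞ for all x, and such that sup_{x ∈ ℝ^d \ B(0,1/n)} |∇W_n(x) − ∇W(x)| ≤ 1/n for all n ≥ 1. Let (ρ_n) be a sequence in 𝒫₂(ℝ^d) converging narrowly to ρ (i.e. ∫ f dρ_n → ∫ f dρ for every bounded continuous f). Then for Lebesgue-almost every x ∈ ℝ^d, lim_{n→∞} ∫_{ℝ^d} ∇W_n(x − y) ρ_n(dy) = ∫_{{y : y ≠ x}} ∇W(x − y) ρ(dy). -/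

import Mathlib

open MeasureTheory Filter Metric
open scoped RealInnerProductSpace Topology BigOperators NNReal ENNReal Classical

noncomputable section

/-- The extended gradient `∇̂W`: `∇W(x)` for `x ≠ 0` and `0` at the origin. -/
def hatGrad (d : ℕ) (W : EuclideanSpace ℝ (Fin d) → ℝ) (x : EuclideanSpace ℝ (Fin d)) :
    EuclideanSpace ℝ (Fin d) :=
  if x = 0 then 0 else gradient W x

/-- Assumptions (A0)-(A2): `W` is Lipschitz with constant `winf ≥ 0`, even, `W 0 = 0`,
`lam`-convex for some `lam ≤ 0`, continuously differentiable away from the origin,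
with gradient bounded by `winf` away from the origin. -/
structure PointyPotential (d : ℕ) (W : EuclideanSpace ℝ (Fin d) → ℝ) (winf lam : ℝ) : Prop where
  winf_nonneg : 0 ≤ winf
  lipschitz : LipschitzWith (Real.toNNReal winf) W
  even : ∀ x, W (-x) = W x
  zero_val : W 0 = 0
  lam_nonpos : lam ≤ 0
  lamConvex : ConvexOn ℝ Set.univ fun x => W x - lam / 2 * ‖x‖ ^ 2
  diffAway : ∀ x : EuclideanSpace ℝ (Fin d), x ≠ 0 → DifferentiableAt ℝ W x
  gradContinuous : ContinuousOn (gradient W) {x : EuclideanSpace ℝ (Fin d) | x ≠ 0}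
  gradBound : ∀ x : EuclideanSpace ℝ (Fin d), x ≠ 0 → ‖gradient W x‖ ≤ winf

/-- A smooth even `lam`-convex approximating potential with gradient bounded by `winf`. -/
structure SmoothApproxPotential (d : ℕ) (Wn : EuclideanSpace ℝ (Fin d) → ℝ)
    (winf lam : ℝ) : Prop where
  smooth : ContDiff ℝ 1 Wn
  even : ∀ x, Wn (-x) = Wn x
  lamConvex : ConvexOn ℝ Set.univ fun x => Wn x - lam / 2 * ‖x‖ ^ 2
  gradBound : ∀ x, ‖gradient Wn x‖ ≤ winf

/-! For `x` outside the countably many atoms of `ρ` (so for a.e. `x`), the kernel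
`y ↦ ∇̂W(x - y)` is bounded by `w_∞` and continuous except at the `ρ`-null point `x`, and
`∇W_n(x - ·)` converges to it uniformly away from `x`. Cut the kernel off continuously inside a
small ball `B(x, r)`: the cut-off kernel is bounded and continuous, so its integrals converge by
narrow convergence, while the cut-off changes the integrals by at most `1/n` plus `2 w_∞` times
the mass of the ball, which is small for `ρ` since `x` is not an atom, and for all `ρ_n` with `n`
large by the portmanteau theorem. -/

section Approximation

variable {ι Ω E : Type*}

theorem tendsto_of_forall_approx [PseudoMetricSpace E] {l : Filter ι} {u : ι → E} {a : E}
    (h : ∀ ε > 0, ∃ v : ι → E, ∃ b, Tendsto v l (𝓝 b) ∧ (∀ᶠ i in l, dist (u i) (v i) ≤ ε) ∧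
      dist b a ≤ ε) :
    Tendsto u l (𝓝 a) := by
  refine Metric.tendsto_nhds.2 fun ε hε => ?_
  obtain ⟨v, b, hvb, huv, hba⟩ := h (ε / 3) (by positivity)
  filter_upwards [huv, Metric.tendsto_nhds.1 hvb (ε / 3) (by positivity)] with i hi hvi
  calc dist (u i) a ≤ dist (u i) (v i) + dist (v i) b + dist b a := dist_triangle4 _ _ _ _
    _ < ε := by linarith

variable [MeasurableSpace Ω]

theorem ae_measure_singleton_eq_zero [MeasurableSingletonClass Ω] (μ : Measure Ω) [SFinite μ]
    (ν : Measure Ω) [NullSingletonClass ν] : ∀ᵐ x ∂ν, μ {x} = 0 := by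
  have hatoms : {x | μ {x} ≠ 0}.Countable := by
    simpa [pos_iff_ne_zero] using Measure.countable_meas_level_set_pos (μ := μ) measurable_id
  exact measure_eq_zero_iff_ae_notMem.1 (hatoms.measure_zero ν) |>.mono fun _ => not_not.1

variable [NormedAddCommGroup E] [NormedSpace ℝ E]

theorem dist_integral_le_of_forall_notMem {μ : Measure Ω} [IsProbabilityMeasure μ]
    {f g : Ω → E} {s : Set Ω} {η C : ℝ} (hf : AEStronglyMeasurable f μ)
    (hg : AEStronglyMeasurable g μ) (hs : MeasurableSet s) (hη : 0 ≤ η)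
    (hfC : ∀ y, ‖f y‖ ≤ C) (hgC : ∀ y, ‖g y‖ ≤ C) (hfg : ∀ y ∉ s, dist (f y) (g y) ≤ η) :
    dist (∫ y, f y ∂μ) (∫ y, g y ∂μ) ≤ η + 2 * C * μ.real s := by
  have hfi := Integrable.of_bound hf C (ae_of_all _ hfC)
  have hgi := Integrable.of_bound hg C (ae_of_all _ hgC)
  have hind : Integrable (s.indicator fun _ => 2 * C) μ := (integrable_const _).indicator hs
  have hpt : ∀ y, ‖f y - g y‖ ≤ η + s.indicator (fun _ => 2 * C) y := by
    intro y
    by_cases hy : y ∈ s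
    · rw [Set.indicator_of_mem hy]
      linarith [norm_sub_le (f y) (g y), hfC y, hgC y]
    · rw [Set.indicator_of_notMem hy, add_zero, ← dist_eq_norm]
      exact hfg y hy
  calc dist (∫ y, f y ∂μ) (∫ y, g y ∂μ) = ‖∫ y, f y - g y ∂μ‖ := by
        rw [dist_eq_norm, integral_sub hfi hgi]
    _ ≤ ∫ y, η + s.indicator (fun _ => 2 * C) y ∂μ :=
        norm_integral_le_of_norm_le ((integrable_const η).add hind) (ae_of_all _ hpt)
    _ = η + 2 * C * μ.real s := by
        rw [integral_add (integrable_const η) hind, integral_const, integral_indicator_const _ hs]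
        simp [mul_comm]

end Approximation

open scoped BoundedContinuousFunction

namespace MeasureTheory.ProbabilityMeasure

variable {ι Ω E : Type*} [MeasurableSpace Ω] {l : Filter ι}

theorem tendsto_integral_of_tendsto [TopologicalSpace Ω] [OpensMeasurableSpace Ω]
    [NormedAddCommGroup E] [NormedSpace ℝ E] [FiniteDimensional ℝ E]
    {μs : ι → ProbabilityMeasure Ω} {μ : ProbabilityMeasure Ω} (hμ : Tendsto μs l (𝓝 μ))
    (g : Ω →ᵇ E) :
    Tendsto (fun i => ∫ ω, g ω ∂(μs i : Measure Ω)) l (𝓝 (∫ ω, g ω ∂(μ : Measure Ω))) := by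
  set e := (Module.finBasis ℝ E).equivFunL
  rw [e.toHomeomorph.isInducing.tendsto_nhds_iff, tendsto_pi_nhds]
  intro k
  set L : E →L[ℝ] ℝ := (ContinuousLinearMap.proj k).comp e.toContinuousLinearMap
  have hL : ∀ ν : ProbabilityMeasure Ω,
      e (∫ ω, g ω ∂(ν : Measure Ω)) k = ∫ ω, L.compLeftContinuousBounded Ω g ω ∂(ν : Measure Ω) :=
    fun ν => (L.integral_comp_comm
      (.of_bound g.continuous.aestronglyMeasurable ‖g‖ (ae_of_all _ g.norm_coe_le_norm))).symm
  simpa only [Function.comp_def, ContinuousLinearEquiv.coe_toHomeomorph, hL] using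
    tendsto_iff_forall_integral_tendsto.1 hμ (L.compLeftContinuousBounded Ω g)

theorem exists_measure_closedBall_lt_of_tendsto [MetricSpace Ω] [OpensMeasurableSpace Ω]
    {μs : ι → ProbabilityMeasure Ω} {μ : ProbabilityMeasure Ω} (hμ : Tendsto μs l (𝓝 μ))
    {x : Ω} (hx : (μ : Measure Ω) {x} = 0) {ε : ℝ} (hε : 0 < ε) :
    ∃ r > 0, (μ : Measure Ω).real (closedBall x r) < ε ∧
      ∀ᶠ i in l, (μs i : Measure Ω).real (closedBall x r) < ε := by
  have hball : Tendsto (fun r => (μ : Measure Ω) (closedBall x r)) (𝓝[>] 0) (𝓝 0) := by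
    refine (tendsto_measure_cthickening_of_isClosed ⟨1, one_pos, measure_ne_top _ _⟩
      isClosed_singleton).mono_left nhdsWithin_le_nhds |>.congr' ?_ |>.trans (by rw [hx])
    filter_upwards [self_mem_nhdsWithin] with r hr
    rw [cthickening_singleton x (le_of_lt hr)]
  obtain ⟨r, hμr, hr⟩ :=
    ((hball.eventually (gt_mem_nhds (ENNReal.ofReal_pos.2 hε))).and self_mem_nhdsWithin).exists
  refine ⟨r, hr, ENNReal.toReal_lt_of_lt_ofReal hμr, ?_⟩
  have hlimsup := limsup_measure_closed_le_of_tendsto hμ (isClosed_closedBall (x := x) (ε := r))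
  filter_upwards [eventually_lt_of_limsup_lt (hlimsup.trans_lt hμr)] with i hi
  exact ENNReal.toReal_lt_of_lt_ofReal hi

end MeasureTheory.ProbabilityMeasure

section NarrowConvergence

open ProbabilityMeasure

variable {Ω E : Type*} [MetricSpace Ω] [NormedAddCommGroup E] [NormedSpace ℝ E]

theorem exists_boundedContinuous_eqOn_compl_ball {G : Ω → E} {x : Ω} {C r : ℝ}
    (hGc : ∀ y ≠ x, ContinuousAt G y) (hGC : ∀ y, ‖G y‖ ≤ C) (hr : 0 < r) :
    ∃ h : Ω →ᵇ E, (∀ y, ‖h y‖ ≤ C) ∧ Set.EqOn h G (ball x r)ᶜ := by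
  obtain ⟨χ, hχ0, hχ1, hχI⟩ := exists_continuous_zero_one_of_isClosed
    (isClosed_closedBall (x := x) (ε := r / 2)) isOpen_ball.isClosed_compl
    (Set.disjoint_compl_right_iff_subset.2 (closedBall_subset_ball (half_lt_self hr)))
  have hbound : ∀ y, ‖χ y • G y‖ ≤ C := fun y => by
    rw [norm_smul, Real.norm_of_nonneg (hχI y).1]
    exact (mul_le_of_le_one_left (norm_nonneg _) (hχI y).2).trans (hGC y)
  have hcont : Continuous fun y => χ y • G y := continuous_iff_continuousAt.2 fun y => by
    rcases eq_or_ne y x with rfl | hy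
    · refine continuousAt_const.congr (f := fun _ => (0 : E)) ?_
      filter_upwards [closedBall_mem_nhds y (half_pos hr)] with z hz
      rw [hχ0 hz, Pi.zero_apply, zero_smul]
    · exact χ.continuous.continuousAt.smul (hGc y hy)
  exact ⟨.ofNormedAddCommGroup _ hcont C hbound, hbound, fun y hy => by simp [hχ1 hy]⟩

variable [MeasurableSpace Ω] [OpensMeasurableSpace Ω] [FiniteDimensional ℝ E]

theorem tendsto_integral_of_tendstoUniformlyOn_compl_ball
    {μs : ℕ → ProbabilityMeasure Ω} {μ : ProbabilityMeasure Ω} (hμ : Tendsto μs atTop (𝓝 μ))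
    {x : Ω} (hx : (μ : Measure Ω) {x} = 0) {F : ℕ → Ω → E} {G : Ω → E} {C : ℝ}
    (hFm : ∀ n, AEStronglyMeasurable (F n) (μs n)) (hGm : StronglyMeasurable G)
    (hFC : ∀ n y, ‖F n y‖ ≤ C) (hGC : ∀ y, ‖G y‖ ≤ C) (hGc : ∀ y ≠ x, ContinuousAt G y)
    (hFG : ∀ r > 0, TendstoUniformlyOn F G atTop (ball x r)ᶜ) :
    Tendsto (fun n => ∫ y, F n y ∂(μs n : Measure Ω)) atTop
      (𝓝 (∫ y, G y ∂(μ : Measure Ω))) := by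
  have hC : 0 ≤ C := (norm_nonneg _).trans (hGC x)
  refine tendsto_of_forall_approx fun ε hε => ?_
  set κ := ε / (4 * C + 1)
  have hκ : 2 * C * κ ≤ ε / 2 := by
    rw [mul_div_assoc', div_le_div_iff₀ (by linarith) two_pos]
    nlinarith
  obtain ⟨r, hr, hμr, hμsr⟩ :=
    exists_measure_closedBall_lt_of_tendsto hμ hx (div_pos hε (by linarith) : 0 < κ)
  obtain ⟨h, hhC, hhG⟩ := exists_boundedContinuous_eqOn_compl_ball hGc hGC hr
  have hfar : ∀ y ∉ closedBall x r, y ∈ (ball x r)ᶜ := fun y hy hy' =>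
    hy (ball_subset_closedBall hy')
  refine ⟨fun n => ∫ y, h y ∂(μs n : Measure Ω), ∫ y, h y ∂(μ : Measure Ω),
    tendsto_integral_of_tendsto hμ h, ?_, ?_⟩
  · filter_upwards [Metric.tendstoUniformlyOn_iff.1 (hFG r hr) (ε / 2) (half_pos hε), hμsr]
      with n hn hμn
    calc _ ≤ ε / 2 + 2 * C * (μs n : Measure Ω).real (closedBall x r) := by
          refine dist_integral_le_of_forall_notMem (hFm n) h.continuous.aestronglyMeasurable
            measurableSet_closedBall (half_pos hε).le (hFC n) hhC fun y hy => ?_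
          rw [hhG (hfar y hy), dist_comm]
          exact (hn y (hfar y hy)).le
      _ ≤ ε := by nlinarith
  · calc _ ≤ 0 + 2 * C * (μ : Measure Ω).real (closedBall x r) := by
          refine dist_integral_le_of_forall_notMem h.continuous.aestronglyMeasurable
            hGm.aestronglyMeasurable measurableSet_closedBall le_rfl hhC hGC fun y hy => ?_
          rw [hhG (hfar y hy), dist_self]
      _ ≤ ε := by nlinarith

end NarrowConvergence

section Potentials

variable {d : ℕ} {W : EuclideanSpace ℝ (Fin d) → ℝ} {winf lam : ℝ}

theorem measurable_hatGrad (W : EuclideanSpace ℝ (Fin d) → ℝ) : Measurable (hatGrad d W) :=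
  Measurable.ite (measurableSet_singleton 0) measurable_const
    ((InnerProductSpace.toDual ℝ (EuclideanSpace ℝ (Fin d))).symm.continuous.measurable.comp
      (measurable_fderiv ℝ W))

theorem setIntegral_ne_eq_integral_hatGrad (μ : Measure (EuclideanSpace ℝ (Fin d)))
    (x : EuclideanSpace ℝ (Fin d)) :
    ∫ y in {y | y ≠ x}, gradient W (x - y) ∂μ = ∫ y, hatGrad d W (x - y) ∂μ := by
  calc ∫ y in {y | y ≠ x}, gradient W (x - y) ∂μ = ∫ y in {y | y ≠ x}, hatGrad d W (x - y) ∂μ :=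
        setIntegral_congr_fun (measurableSet_singleton x).compl fun y hy =>
          (if_neg (sub_ne_zero.2 (Ne.symm hy))).symm
    _ = ∫ y, hatGrad d W (x - y) ∂μ :=
        setIntegral_eq_integral_of_forall_compl_eq_zero fun y hy => by simp_all [hatGrad]

theorem tendstoUniformlyOn_gradient_comp_sub {Wn : ℕ → EuclideanSpace ℝ (Fin d) → ℝ}
    (happrox : ∀ n : ℕ, 1 ≤ n → ∀ x : EuclideanSpace ℝ (Fin d), (1 : ℝ) / n ≤ ‖x‖ →
      ‖gradient (Wn n) x - gradient W x‖ ≤ 1 / n)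
    (x : EuclideanSpace ℝ (Fin d)) {r : ℝ} (hr : 0 < r) :
    TendstoUniformlyOn (fun n y => gradient (Wn (n + 1)) (x - y)) (fun y => hatGrad d W (x - y))
      atTop (ball x r)ᶜ := by
  refine Metric.tendstoUniformlyOn_iff.2 fun ε hε => ?_
  filter_upwards [tendsto_one_div_add_atTop_nhds_zero_nat.eventually (gt_mem_nhds (lt_min hε hr))]
    with n hn y hy
  have hxy : r ≤ ‖x - y‖ := by simpa [dist_eq_norm, norm_sub_rev] using hy
  have hsmall : 1 / ((n + 1 : ℕ) : ℝ) < min ε r := by push_cast; exact hn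
  rw [hatGrad, if_neg (norm_pos_iff.1 (hr.trans_le hxy)), dist_comm, dist_eq_norm]
  calc _ ≤ 1 / ((n + 1 : ℕ) : ℝ) :=
        happrox (n + 1) le_add_self _ (by linarith [min_le_right ε r])
    _ < ε := by linarith [min_le_left ε r]

namespace PointyPotential

theorem norm_hatGrad_le (hW : PointyPotential d W winf lam) (z : EuclideanSpace ℝ (Fin d)) :
    ‖hatGrad d W z‖ ≤ winf := by
  unfold hatGrad
  split_ifs with hz
  · simpa using hW.winf_nonneg
  · exact hW.gradBound z hz

theorem continuousAt_hatGrad (hW : PointyPotential d W winf lam) {z : EuclideanSpace ℝ (Fin d)}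
    (hz : z ≠ 0) :
    ContinuousAt (hatGrad d W) z := by
  refine (hW.gradContinuous.continuousAt (isOpen_ne.mem_nhds hz)).congr ?_
  filter_upwards [isOpen_ne.mem_nhds hz] with w hw using (if_neg hw).symm

end PointyPotential

theorem SmoothApproxPotential.continuous_gradient {V : EuclideanSpace ℝ (Fin d) → ℝ}
    (hV : SmoothApproxPotential d V winf lam) : Continuous (gradient V) :=
  (InnerProductSpace.toDual ℝ _).symm.continuous.comp (hV.smooth.continuous_fderiv one_ne_zero)

end Potentials

theorem velocity_stability_regularized_ae_general
    {d : ℕ} (W : EuclideanSpace ℝ (Fin d) → ℝ) (winf lam : ℝ)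
    (hW : PointyPotential d W winf lam)
    (Wn : ℕ → EuclideanSpace ℝ (Fin d) → ℝ)
    (hWn : ∀ n : ℕ, 1 ≤ n → SmoothApproxPotential d (Wn n) winf lam)
    (happrox : ∀ n : ℕ, 1 ≤ n → ∀ x : EuclideanSpace ℝ (Fin d), (1 : ℝ) / n ≤ ‖x‖ →
      ‖gradient (Wn n) x - gradient W x‖ ≤ 1 / n)
    (ρn : ℕ → Measure (EuclideanSpace ℝ (Fin d)))
    (ρ : Measure (EuclideanSpace ℝ (Fin d)))
    (hρn : ∀ n, IsProbabilityMeasure (ρn n))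
    (hρ : IsProbabilityMeasure ρ)
    (hnarrow : ∀ f : BoundedContinuousFunction (EuclideanSpace ℝ (Fin d)) ℝ,
      Tendsto (fun n => ∫ x, f x ∂(ρn n)) atTop (𝓝 (∫ x, f x ∂ρ))) :
    ∀ᵐ x ∂(volume : Measure (EuclideanSpace ℝ (Fin d))),
      Tendsto
        (fun n => ∫ y, gradient (Wn n) (x - y) ∂(ρn n))
        atTop
        (𝓝 (∫ y in {y : EuclideanSpace ℝ (Fin d) | y ≠ x}, gradient W (x - y) ∂ρ)) := by
  rcases subsingleton_or_nontrivial (EuclideanSpace ℝ (Fin d)) with _ | _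
  · refine ae_of_all _ fun x => ?_
    simp only [Subsingleton.elim _ (0 : EuclideanSpace ℝ (Fin d)), tendsto_const_nhds]
  let μs : ℕ → ProbabilityMeasure (EuclideanSpace ℝ (Fin d)) := fun n => ⟨ρn (n + 1), hρn _⟩
  have hμ : Tendsto μs atTop (𝓝 ⟨ρ, hρ⟩) :=
    ProbabilityMeasure.tendsto_iff_forall_integral_tendsto.2
      fun f => (hnarrow f).comp (tendsto_add_atTop_nat 1)
  filter_upwards [ae_measure_singleton_eq_zero ρ volume] with x hx
  rw [setIntegral_ne_eq_integral_hatGrad, ← tendsto_add_atTop_iff_nat 1]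
  have hsub : Continuous fun y => x - y := continuous_const.sub continuous_id
  exact tendsto_integral_of_tendstoUniformlyOn_compl_ball hμ hx
    (fun n => ((hWn (n + 1) le_add_self).continuous_gradient.comp hsub).aestronglyMeasurable)
    ((measurable_hatGrad W).comp hsub.measurable).stronglyMeasurable
    (fun n y => (hWn (n + 1) le_add_self).gradBound _) (fun y => hW.norm_hatGrad_le _)
    (fun y hy => (hW.continuousAt_hatGrad (sub_ne_zero.2 hy.symm)).comp hsub.continuousAt)
    fun r hr => tendstoUniformlyOn_gradient_comp_sub happrox x hr

/-- if `W_n` are smooth even `λ`-convex potentials approximating the pointy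
potential `W` uniformly away from the origin and `ρ_n ∈ 𝒫₂(ℝ^d)` converge narrowly to `ρ`,
then for Lebesgue-a.e. `x`, `∫ ∇W_n(x−y) ρ_n(dy) → ∫_{y ≠ x} ∇W(x−y) ρ(dy)`. -/
theorem velocity_stability_regularized_ae
    {d : ℕ} (W : EuclideanSpace ℝ (Fin d) → ℝ) (winf lam : ℝ)
    (hW : PointyPotential d W winf lam)
    (Wn : ℕ → EuclideanSpace ℝ (Fin d) → ℝ)
    (hWn : ∀ n : ℕ, 1 ≤ n → SmoothApproxPotential d (Wn n) winf lam)
    (happrox : ∀ n : ℕ, 1 ≤ n → ∀ x : EuclideanSpace ℝ (Fin d), (1 : ℝ) / n ≤ ‖x‖ →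
      ‖gradient (Wn n) x - gradient W x‖ ≤ 1 / n)
    (ρn : ℕ → Measure (EuclideanSpace ℝ (Fin d)))
    (ρ : Measure (EuclideanSpace ℝ (Fin d)))
    (hρn : ∀ n, IsProbabilityMeasure (ρn n))
    (hρn2 : ∀ n, Integrable (fun x => ‖x‖ ^ 2) (ρn n))
    (hρ : IsProbabilityMeasure ρ) (hρ2 : Integrable (fun x => ‖x‖ ^ 2) ρ)
    (hnarrow : ∀ f : BoundedContinuousFunction (EuclideanSpace ℝ (Fin d)) ℝ,
      Tendsto (fun n => ∫ x, f x ∂(ρn n)) atTop (𝓝 (∫ x, f x ∂ρ))) :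
    ∀ᵐ x ∂(volume : Measure (EuclideanSpace ℝ (Fin d))),
      Tendsto
        (fun n => ∫ y, gradient (Wn n) (x - y) ∂(ρn n))
        atTop
        (𝓝 (∫ y in {y : EuclideanSpace ℝ (Fin d) | y ≠ x}, gradient W (x - y) ∂ρ)) :=
  velocity_stability_regularized_ae_general W winf lam hW Wn hWn happrox ρn ρ hρn hρ hnarrow
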